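/- Let g ≥ 1. In the group D_g, the subgroup generated by σ and ζ is free abelian of rank 2, i.e. isomorphic to ℤ × ℤ. -/

import Mathlib

open scoped commutatorElement

/-- Generators of the group `D_g`: `σ`, `ζ` and `a i`, `b i` for `i : Fin g`. -/
inductive DGen (g : ℕ) : Type
  | s : DGen g
  | z : DGen g
  | a : Fin g → DGen g
  | b : Fin g → DGen g

/-- Relators of `D_g`: `σ` and `ζ` are central, `[a_i, a_j] = [a_i, b_j] = 1` for
`i ≠ j`, and `[a_j, b_j] = σ²`. -/
def DgRels (g : ℕ) : Set (FreeGroup (DGen g)) :=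
  {r | ∃ x : DGen g, r = ⁅(.of .s : FreeGroup (DGen g)), .of x⁆} ∪
  {r | ∃ x : DGen g, r = ⁅(.of .z : FreeGroup (DGen g)), .of x⁆} ∪
  {r | ∃ i j : Fin g, i ≠ j ∧ r = ⁅(.of (.a i) : FreeGroup (DGen g)), .of (.a j)⁆} ∪
  {r | ∃ i j : Fin g, i ≠ j ∧ r = ⁅(.of (.a i) : FreeGroup (DGen g)), .of (.b j)⁆} ∪
  {r | ∃ j : Fin g,
      r = ⁅(.of (.a j) : FreeGroup (DGen g)), .of (.b j)⁆ * ((.of .s : FreeGroup (DGen g)) ^ 2)⁻¹}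

/-- The group `D_g`, as a presented group. -/
abbrev DGroup (g : ℕ) := PresentedGroup (DgRels g)


/-!
Send `D_g` to the Heisenberg-type group `ℤ^g × ℤ^g × ℤ²` with product
`(u, v, c) (u', v', c') = (u + u', v + v', c + c' + (u ⬝ v', 0))`, by `a_i ↦ 2eᵢ`, `b_i ↦ eᵢ`
and `σ, ζ` to the two basis vectors of the central `ℤ²`; the factor `2` makes `[a_i, b_i]` land
on the image of `σ²`. As `σ` and `ζ` commute, `(m, n) ↦ σ^m ζ^n` maps `ℤ²` onto `⟨σ, ζ⟩`, and
followed by the map to the Heisenberg group it becomes the embedding `(m, n) ↦ (0, 0, (m, n))`,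
so it is injective.
-/

@[ext]
structure Heisenberg {A B C : Type*} [AddCommGroup A] [AddCommGroup B] [AddCommGroup C]
    (β : A →+ B →+ C) where
  x : A
  y : B
  z : C

namespace Heisenberg

variable {A B C : Type*} [AddCommGroup A] [AddCommGroup B] [AddCommGroup C] {β : A →+ B →+ C}

instance : Mul (Heisenberg β) := ⟨fun p q => ⟨p.x + q.x, p.y + q.y, p.z + q.z + β p.x q.y⟩⟩
instance : One (Heisenberg β) := ⟨⟨0, 0, 0⟩⟩
instance : Inv (Heisenberg β) := ⟨fun p => ⟨-p.x, -p.y, -p.z + β p.x p.y⟩⟩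

@[simp] lemma mul_x (p q : Heisenberg β) : (p * q).x = p.x + q.x := rfl
@[simp] lemma mul_y (p q : Heisenberg β) : (p * q).y = p.y + q.y := rfl
@[simp] lemma mul_z (p q : Heisenberg β) : (p * q).z = p.z + q.z + β p.x q.y := rfl
@[simp] lemma one_x : (1 : Heisenberg β).x = 0 := rfl
@[simp] lemma one_y : (1 : Heisenberg β).y = 0 := rfl
@[simp] lemma one_z : (1 : Heisenberg β).z = 0 := rfl
@[simp] lemma inv_x (p : Heisenberg β) : p⁻¹.x = -p.x := rfl
@[simp] lemma inv_y (p : Heisenberg β) : p⁻¹.y = -p.y := rfl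
@[simp] lemma inv_z (p : Heisenberg β) : p⁻¹.z = -p.z + β p.x p.y := rfl

instance : Group (Heisenberg β) where
  mul_assoc p q r := by ext <;> simp <;> abel
  one_mul p := by ext <;> simp
  mul_one p := by ext <;> simp
  inv_mul_cancel p := by ext <;> simp

def ofCenter : Multiplicative C →* Heisenberg β where
  toFun c := ⟨0, 0, c.toAdd⟩
  map_one' := rfl
  map_mul' _ _ := by ext <;> simp

@[simp] lemma ofCenter_x (c : Multiplicative C) : (ofCenter c : Heisenberg β).x = 0 := rfl
@[simp] lemma ofCenter_y (c : Multiplicative C) : (ofCenter c : Heisenberg β).y = 0 := rfl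
@[simp] lemma ofCenter_z (c : Multiplicative C) : (ofCenter c : Heisenberg β).z = c.toAdd := rfl

lemma ofCenter_injective : Function.Injective (ofCenter : Multiplicative C →* Heisenberg β) :=
  fun _ _ => congrArg z

lemma commutatorElement_eq (p q : Heisenberg β) :
    ⁅p, q⁆ = ofCenter (.ofAdd (β p.x q.y - β q.x p.y)) := by
  ext <;> simp [commutatorElement_def, -ofAdd_sub]
  abel

lemma commute_ofCenter (c : Multiplicative C) (p : Heisenberg β) : Commute (ofCenter c) p := by
  rw [← commutatorElement_eq_one_iff_commute, commutatorElement_eq]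
  simp

end Heisenberg

section Commute

variable {G : Type*} [Group G] {a b : G}

def Commute.zpowersCoprod (h : Commute a b) : Multiplicative ℤ × Multiplicative ℤ →* G :=
  (zpowersHom G a).noncommCoprod (zpowersHom G b) fun _ _ => h.zpow_zpow _ _

@[simp] lemma Commute.zpowersCoprod_apply (h : Commute a b)
    (p : Multiplicative ℤ × Multiplicative ℤ) :
    h.zpowersCoprod p = a ^ p.1.toAdd * b ^ p.2.toAdd := rfl

lemma Commute.range_zpowersCoprod (h : Commute a b) :
    h.zpowersCoprod.range = Subgroup.closure {a, b} := by
  refine (MonoidHom.noncommCoprod_range _ _ _).trans ?_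
  rw [Subgroup.range_zpowersHom, Subgroup.range_zpowersHom, Subgroup.zpowers_eq_closure,
    Subgroup.zpowers_eq_closure, ← Subgroup.closure_union, Set.singleton_union]

end Commute

def dotPairing (g : ℕ) : (Fin g → ℤ) →+ (Fin g → ℤ) →+ ℤ × ℤ :=
  AddMonoidHom.mk' (fun u => AddMonoidHom.mk' (fun v => (u ⬝ᵥ v, 0)) fun _ _ => by
    simp [dotProduct_add]) fun _ _ => by ext <;> simp [add_dotProduct]

@[simp] lemma dotPairing_apply {g : ℕ} (u v : Fin g → ℤ) : dotPairing g u v = (u ⬝ᵥ v, 0) := rfl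

def genToHeisenberg {g : ℕ} : DGen g → Heisenberg (dotPairing g)
  | .s => Heisenberg.ofCenter (.ofAdd (1, 0))
  | .z => Heisenberg.ofCenter (.ofAdd (0, 1))
  | .a i => ⟨Pi.single i 2, 0, 0⟩
  | .b i => ⟨0, Pi.single i 1, 0⟩

lemma lift_genToHeisenberg_eq_one {g : ℕ} :
    ∀ r ∈ DgRels g, FreeGroup.lift genToHeisenberg r = 1 := by
  rintro r ((((⟨x, rfl⟩ | ⟨x, rfl⟩) | ⟨i, j, hij, rfl⟩) | ⟨i, j, hij, rfl⟩) | ⟨j, rfl⟩) <;>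
    simp only [map_commutatorElement, map_mul, map_inv, map_pow, FreeGroup.lift_apply_of]
  iterate 2 exact commutatorElement_eq_one_iff_commute.mpr (Heisenberg.commute_ofCenter _ _)
  all_goals simp only [genToHeisenberg, Heisenberg.commutatorElement_eq]
  · simp
  · simp [hij, Prod.mk_zero_zero]
  · rw [mul_inv_eq_one, ← map_pow]
    congr 1
    simp [sq, ← ofAdd_add]

def toHeisenberg (g : ℕ) : DGroup g →* Heisenberg (dotPairing g) :=
  PresentedGroup.toGroup lift_genToHeisenberg_eq_one

lemma commute_of_s_of_z (g : ℕ) :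
    Commute (PresentedGroup.of .s : DGroup g) (PresentedGroup.of .z) :=
  commutatorElement_eq_one_iff_commute.mp <| (map_commutatorElement _ _ _).symm.trans <|
    PresentedGroup.one_of_mem (Or.inl (Or.inl (Or.inl (Or.inl ⟨.z, rfl⟩))))

lemma toHeisenberg_zpowersCoprod (g : ℕ) (p : Multiplicative ℤ × Multiplicative ℤ) :
    toHeisenberg g ((commute_of_s_of_z g).zpowersCoprod p) =
      Heisenberg.ofCenter ((MulEquiv.prodMultiplicative ℤ ℤ).symm p) := by
  have hp : (MulEquiv.prodMultiplicative ℤ ℤ).symm p =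
      .ofAdd (1, 0) ^ p.1.toAdd * .ofAdd (0, 1) ^ p.2.toAdd := by
    rw [← ofAdd_zsmul, ← ofAdd_zsmul, ← ofAdd_add]
    ext <;> simp
  rw [hp, Commute.zpowersCoprod_apply, map_mul, map_zpow, map_zpow, toHeisenberg,
    PresentedGroup.toGroup.of, PresentedGroup.toGroup.of, map_mul, map_zpow, map_zpow]
  rfl

theorem stmt16_general (g : ℕ) :
    Nonempty (↥(Subgroup.closure
        {(PresentedGroup.of .s : DGroup g), (PresentedGroup.of .z : DGroup g)}) ≃*
      Multiplicative (ℤ × ℤ)) := by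
  have hcomm := commute_of_s_of_z g
  have hcomp : toHeisenberg g ∘ hcomm.zpowersCoprod =
      Heisenberg.ofCenter ∘ (MulEquiv.prodMultiplicative ℤ ℤ).symm :=
    funext (toHeisenberg_zpowersCoprod g)
  have hinj : Function.Injective hcomm.zpowersCoprod :=
    .of_comp (f := toHeisenberg g) <| hcomp ▸
      Heisenberg.ofCenter_injective.comp (MulEquiv.prodMultiplicative ℤ ℤ).symm.injective
  exact ⟨(MulEquiv.subgroupCongr hcomm.range_zpowersCoprod.symm).trans <|
    (MonoidHom.ofInjective hinj).symm.trans (MulEquiv.prodMultiplicative ℤ ℤ).symm⟩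

/-- In `D_g`, the subgroup generated by `σ` and `ζ` is free
abelian of rank `2`. -/
theorem stmt16 (g : ℕ) (hg : 1 ≤ g) :
    Nonempty (↥(Subgroup.closure
        {(PresentedGroup.of .s : DGroup g), (PresentedGroup.of .z : DGroup g)}) ≃*
      Multiplicative (ℤ × ℤ)) :=
  stmt16_general g
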